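/- Let b, d ∈ ℝ and let f₁ be continuous on (0,∞). Let S₁ be a primitive on (0,∞) of the function s ↦ s^{b−1} f₁(s), and let R(w) = w^b/b if b ≠ 0 and R(w) = ln w if b = 0. If w : I → (0,∞) is a solution of equation (5.12) on an interval I, then the Painlevé function τ ↦ w(τ)^{b+1}/√(w(τ)² + w'(τ)²) − S₁(w(τ)) + d R(w(τ)) is constant on I. -/

import Mathlib

open Real Set Filter Topology

noncomputable section

/-- A solution of equation (5.12) on a set `I`, with derivative `w'`:
`(d/dτ)[w'/√(w² + w'²)] − b w/√(w² + w'²) + f₁(w) − d·sgn(w) = 0`,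
where `(w, w') ≠ (0, 0)` everywhere on `I`. -/
def Sol512On (b d : ℝ) (f₁ w w' : ℝ → ℝ) (I : Set ℝ) : Prop :=
  ContinuousOn w' I ∧
  (∀ τ ∈ I, HasDerivWithinAt w (w' τ) I τ) ∧
  (∀ τ ∈ I, (w τ, w' τ) ≠ (0, 0)) ∧
  ∃ F' : ℝ → ℝ,
    (∀ τ ∈ I, HasDerivWithinAt
      (fun s => w' s / Real.sqrt (w s ^ 2 + w' s ^ 2)) (F' τ) I τ) ∧
    (∀ τ ∈ I, F' τ - b * w τ / Real.sqrt (w τ ^ 2 + w' τ ^ 2) + f₁ (w τ)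
      - d * Real.sign (w τ) = 0)

/-- Conditions (3.8) on the nonlinearity `f₁`: odd, continuous on `[0,∞)`,
`f₁(s)/s → 1` as `s → 0⁺`, `f₁(s) → ∞` as `s → ∞`, strictly increasing on `(0,∞)`. -/
def Cond38 (f₁ : ℝ → ℝ) : Prop :=
  (∀ s, f₁ (-s) = -f₁ s) ∧ ContinuousOn f₁ (Ici 0) ∧
  Tendsto (fun s => f₁ s / s) (𝓝[>] (0:ℝ)) (𝓝 1) ∧
  Tendsto f₁ atTop atTop ∧
  StrictMonoOn f₁ (Ioi 0)

/-- A function taking both positive and negative values. -/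
def SignChanging (ω : ℝ → ℝ) : Prop := (∃ σ, 0 < ω σ) ∧ (∃ σ, ω σ < 0)

/-- `T` is the least period of `ω`. -/
def IsLeastPeriod (ω : ℝ → ℝ) (T : ℝ) : Prop :=
  0 < T ∧ Function.Periodic ω T ∧ ∀ T', 0 < T' → Function.Periodic ω T' → T ≤ T'

/-!
Because `w > 0`, the unit vector `(w, w') / √(w² + w'²)` lies on the right half of the unit
circle, so its first component `u` equals `√(1 - v²)` with `v = w' / √(w² + w'²)`; hence `u` is
differentiable even though `w'` need not be, with `u' = -v v' / u`, and the equation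
expresses `v'` as `b w / √(w² + w'²) - f₁(w) + d`. Writing `w^(b+1) / √(w² + w'²)` as `w^b` times
that first component, and using `S₁' = s^(b-1) f₁` and `R' = s^(b-1)`, the derivative of the
Painlevé function cancels to zero on the interval `I`.
-/

theorem Convex.eq_of_hasDerivWithinAt_zero {s : Set ℝ} {f : ℝ → ℝ} (hs : Convex ℝ s)
    (hf : ∀ x ∈ s, HasDerivWithinAt f 0 s x) {x y : ℝ} (hx : x ∈ s) (hy : y ∈ s) :
    f x = f y := by
  have h := hs.norm_image_sub_le_of_norm_hasDerivWithin_le hf (C := 0)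
    (fun _ _ => norm_zero.le) hx hy
  rw [zero_mul, norm_le_zero_iff, sub_eq_zero] at h
  exact h.symm

theorem hasDerivAt_of_eqOn_rpow_div_or_log {b : ℝ} {R : ℝ → ℝ}
    (hRb : b ≠ 0 → ∀ x ∈ Ioi (0:ℝ), R x = x ^ b / b)
    (hR0 : b = 0 → ∀ x ∈ Ioi (0:ℝ), R x = Real.log x) {x : ℝ} (hx : 0 < x) :
    HasDerivAt R (x ^ (b - 1)) x := by
  rcases eq_or_ne b 0 with rfl | hb
  · have hR : R =ᶠ[𝓝 x] Real.log :=
      eventually_of_mem (Ioi_mem_nhds hx) (hR0 rfl)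
    rw [zero_sub, Real.rpow_neg_one]
    exact (Real.hasDerivAt_log hx.ne').congr_of_eventuallyEq hR
  · have hR : R =ᶠ[𝓝 x] fun y => y ^ b / b :=
      eventually_of_mem (Ioi_mem_nhds hx) (hRb hb)
    have h := ((Real.hasDerivAt_rpow_const (p := b) (Or.inl hx.ne')).div_const b)
    rw [mul_div_cancel_left₀ _ hb] at h
    exact h.congr_of_eventuallyEq hR

theorem HasDerivWithinAt.of_sq_add_sq_eq_one {u v : ℝ → ℝ} {s : Set ℝ} {x v' : ℝ}
    (hv : HasDerivWithinAt v v' s x) (hu : ∀ y ∈ s, 0 < u y)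
    (huv : ∀ y ∈ s, u y ^ 2 + v y ^ 2 = 1) (hx : x ∈ s) :
    HasDerivWithinAt u (-(v x * v') / u x) s x := by
  have hsqrt : ∀ y ∈ s, u y = √(1 - v y ^ 2) := fun y hy => by
    rw [← huv y hy, add_sub_cancel_right, Real.sqrt_sq (hu y hy).le]
  have hne : 1 - v x ^ 2 ≠ 0 := by
    rw [← huv x hx, add_sub_cancel_right]
    exact (pow_pos (hu x hx) 2).ne'
  have hsq : HasDerivWithinAt (fun y => 1 - v y ^ 2) (0 - 2 * v x ^ 1 * v') s x :=
    (hasDerivWithinAt_const x s 1).sub (hv.pow 2)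
  have h := (hsq.sqrt hne).congr hsqrt (hsqrt x hx)
  rw [← hsqrt x hx] at h
  refine h.congr_deriv ?_
  have := (hu x hx).ne'
  field_simp
  ring

def painleveFunction (b d : ℝ) (S₁ R w w' : ℝ → ℝ) (τ : ℝ) : ℝ :=
  w τ ^ (b + 1) / √(w τ ^ 2 + w' τ ^ 2) - S₁ (w τ) + d * R (w τ)

theorem hasDerivWithinAt_painleveFunction {b d : ℝ} {f₁ S₁ R w w' : ℝ → ℝ} {I : Set ℝ}
    (hS₁ : ∀ s ∈ Ioi (0:ℝ), HasDerivAt S₁ (s ^ (b - 1) * f₁ s) s)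
    (hRb : b ≠ 0 → ∀ x ∈ Ioi (0:ℝ), R x = x ^ b / b)
    (hR0 : b = 0 → ∀ x ∈ Ioi (0:ℝ), R x = Real.log x)
    (hpos : ∀ τ ∈ I, 0 < w τ) (hw : Sol512On b d f₁ w w' I) {τ : ℝ} (hτ : τ ∈ I) :
    HasDerivWithinAt (painleveFunction b d S₁ R w w') 0 I τ := by
  obtain ⟨-, hwd, -, F', hF', heq⟩ := hw
  set r : ℝ → ℝ := fun s => √(w s ^ 2 + w' s ^ 2)
  have hr : ∀ s ∈ I, 0 < r s := fun s hs => Real.sqrt_pos.mpr (by positivity [hpos s hs])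
  have hcircle : ∀ s ∈ I, (w s / r s) ^ 2 + (w' s / r s) ^ 2 = 1 := fun s hs => by
    rw [div_pow, div_pow, ← add_div, Real.sq_sqrt (by positivity)]
    exact div_self (by positivity [hpos s hs])
  have hw_pos := hpos τ hτ
  have hF'_eq : F' τ = b * w τ / r τ - f₁ (w τ) + d := by
    have := heq τ hτ
    rw [Real.sign_of_pos hw_pos] at this
    linarith
  have hwr : HasDerivWithinAt (fun s => w s / r s) (-(w' τ / r τ * F' τ) / (w τ / r τ)) I τ :=
    (hF' τ hτ).of_sq_add_sq_eq_one (fun s hs => div_pos (hpos s hs) (hr s hs)) hcircle hτ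
  have hwb : HasDerivWithinAt (fun s => w s ^ b) (w' τ * b * w τ ^ (b - 1)) I τ :=
    (hwd τ hτ).rpow_const (Or.inl hw_pos.ne')
  have hfactor : ∀ s ∈ I, w s ^ (b + 1) / r s = w s ^ b * (w s / r s) := fun s hs => by
    rw [Real.rpow_add_one (hpos s hs).ne', mul_div_assoc]
  have hS : HasDerivWithinAt (fun s => S₁ (w s)) (w τ ^ (b - 1) * f₁ (w τ) * w' τ) I τ :=
    (hS₁ (w τ) hw_pos).comp_hasDerivWithinAt τ (hwd τ hτ)
  have hR : HasDerivWithinAt (fun s => R (w s)) (w τ ^ (b - 1) * w' τ) I τ :=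
    (hasDerivAt_of_eqOn_rpow_div_or_log hRb hR0 hw_pos).comp_hasDerivWithinAt τ (hwd τ hτ)
  refine ((((hwb.mul hwr).congr hfactor (hfactor τ hτ)).sub hS).add
    (hR.const_mul d)).congr_deriv ?_
  have hrτ := (hr τ hτ).ne'
  rw [hF'_eq, Real.rpow_sub_one hw_pos.ne']
  field_simp
  ring

theorem statement15_general (b d : ℝ) (f₁ : ℝ → ℝ)
    (S₁ : ℝ → ℝ) (hS₁ : ∀ s ∈ Ioi (0:ℝ), HasDerivAt S₁ (s ^ (b - 1) * f₁ s) s)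
    (R : ℝ → ℝ)
    (hRb : b ≠ 0 → ∀ w ∈ Ioi (0:ℝ), R w = w ^ b / b)
    (hR0 : b = 0 → ∀ w ∈ Ioi (0:ℝ), R w = Real.log w)
    (w w' : ℝ → ℝ) (I : Set ℝ) (hI : I.OrdConnected)
    (hpos : ∀ τ ∈ I, 0 < w τ)
    (hw : Sol512On b d f₁ w w' I) :
    ∀ τ₁ ∈ I, ∀ τ₂ ∈ I,
      w τ₁ ^ (b + 1) / Real.sqrt (w τ₁ ^ 2 + w' τ₁ ^ 2) - S₁ (w τ₁) + d * R (w τ₁) =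
      w τ₂ ^ (b + 1) / Real.sqrt (w τ₂ ^ 2 + w' τ₂ ^ 2) - S₁ (w τ₂) + d * R (w τ₂) :=
  fun _ h₁ _ h₂ => hI.convex.eq_of_hasDerivWithinAt_zero (f := painleveFunction b d S₁ R w w')
    (fun _ hτ => hasDerivWithinAt_painleveFunction hS₁ hRb hR0 hpos hw hτ) h₁ h₂

theorem statement15 (b d : ℝ) (f₁ : ℝ → ℝ) (hf₁ : ContinuousOn f₁ (Ioi 0))
    (S₁ : ℝ → ℝ) (hS₁ : ∀ s ∈ Ioi (0:ℝ), HasDerivAt S₁ (s ^ (b - 1) * f₁ s) s)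
    (R : ℝ → ℝ)
    (hRb : b ≠ 0 → ∀ w ∈ Ioi (0:ℝ), R w = w ^ b / b)
    (hR0 : b = 0 → ∀ w ∈ Ioi (0:ℝ), R w = Real.log w)
    (w w' : ℝ → ℝ) (I : Set ℝ) (hI : I.OrdConnected)
    (hpos : ∀ τ ∈ I, 0 < w τ)
    (hw : Sol512On b d f₁ w w' I) :
    ∀ τ₁ ∈ I, ∀ τ₂ ∈ I,
      w τ₁ ^ (b + 1) / Real.sqrt (w τ₁ ^ 2 + w' τ₁ ^ 2) - S₁ (w τ₁) + d * R (w τ₁) =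
      w τ₂ ^ (b + 1) / Real.sqrt (w τ₂ ^ 2 + w' τ₂ ^ 2) - S₁ (w τ₂) + d * R (w τ₂) :=
  statement15_general b d f₁ S₁ hS₁ R hRb hR0 w w' I hI hpos hw
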